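/- Let K be an O-category with strict morphisms and initial object ⊥, let F : K → K be locally continuous, and let κ : Φ ⇒ A be an O-colimit of the chain Φ : ⊥ → F⊥ → F²⊥ → ⋯ (with first link the unique morphism ⊥ → F⊥). Then (A, fold) with fold = ⊔_n κ_{n+1} ∘ F(κ_n^p) is an initial F-algebra: for every F-algebra (B, b : F B → B), the morphism φ = ⊔_n β_n ∘ κ_n^p, where β₀ = ⊥_B and β_{n+1} = b ∘ F β_n, is the unique morphism A → B with φ ∘ fold = b ∘ F φ. -/

import Mathlib

/-!
Because `κₙ ≫ κₙᵖ = 𝟙`, the composite `κₙ ≫ κₘᵖ` (for `n ≤ m`) is the link `Φₙ ⟶ Φₘ` of the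
chain. Hence for any cocone `γ` the chain `κₙ ≫ κₘᵖ ≫ γₘ` is eventually constant at `γₙ`, so
the mediating morphism `⊔ₘ κₘᵖ ≫ γₘ` restricts to `γ` along `κ`. Applied to the cocone `β`
(a cocone because `⊥` is initial) this gives `κₙ ≫ φ = βₙ`; applied to the image of the
colimit under `F` it gives `F κₙ ≫ fold = κₙ₊₁`. The homomorphism equation for `φ` then holds
termwise, by continuity of composition and of `F`. Conversely, an algebra homomorphism `ψ`
satisfies `κₙ ≫ ψ = βₙ` by induction on `n`, so `ψ = (⊔ₙ κₙᵖ ≫ κₙ) ≫ ψ = φ`.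
-/

open CategoryTheory OmegaCompletePartialOrder

universe v u

class OHom (K : Type u) [Category.{v} K] where
  homOrder : ∀ X Y : K, OmegaCompletePartialOrder (X ⟶ Y)

attribute [instance] OHom.homOrder

/-- An O-category: a category enriched in dcpos with continuous composition. -/
class OCat (K : Type u) [Category.{v} K] extends OHom K where
  comp_mono : ∀ {X Y Z : K} {f f' : X ⟶ Y} {g g' : Y ⟶ Z},
    f ≤ f' → g ≤ g' → f ≫ g ≤ f' ≫ g'
  comp_cont_left : ∀ {X Y Z : K} (g : Y ⟶ Z) (c : Chain (X ⟶ Y))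
    (hm : Monotone fun n => c n ≫ g),
    ωSup c ≫ g = ωSup ⟨fun n => c n ≫ g, hm⟩
  comp_cont_right : ∀ {X Y Z : K} (f : X ⟶ Y) (c : Chain (Y ⟶ Z))
    (hm : Monotone fun n => f ≫ c n),
    f ≫ ωSup c = ωSup ⟨fun n => f ≫ c n, hm⟩

/-- Iterated application of an endofunctor to an object: `pob F X n = Fⁿ X`. -/
def pob {K : Type u} [Category.{v} K] (F : K ⥤ K) (X : K) : ℕ → K
  | 0 => X
  | n + 1 => F.obj (pob F X n)

/-- The links `Fⁿ k : Fⁿ X ⟶ Fⁿ⁺¹ X` of the ω-chain generated by a first link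
`k : X ⟶ F X`. -/
def plink {K : Type u} [Category.{v} K] (F : K ⥤ K) {X : K} (k : X ⟶ F.obj X) :
    ∀ n, pob F X n ⟶ pob F X (n + 1)
  | 0 => k
  | n + 1 => F.map (plink F k n)

theorem OmegaCompletePartialOrder.ωSup_eq_of_eventually_eq {α : Type*}
    [OmegaCompletePartialOrder α] {c : Chain α} {x : α} (n : ℕ)
    (h : ∀ m, n ≤ m → c m = x) : ωSup c = x :=
  le_antisymm
    (ωSup_le _ _ fun m => (c.monotone (le_max_left m n)).trans_eq (h _ (le_max_right m n)))
    ((h n le_rfl).symm.trans_le (le_ωSup c n))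

theorem CategoryTheory.Functor.OfSequence.map_comp_of_cocone {K : Type u} [Category.{v} K]
    {X : ℕ → K} (d : ∀ n, X n ⟶ X (n + 1)) {A : K} (γ : ∀ n, X n ⟶ A)
    (hγ : ∀ n, d n ≫ γ (n + 1) = γ n) {n m : ℕ} (h : n ≤ m) : map d n m h ≫ γ m = γ n := by
  induction m, h using Nat.le_induction with
  | base => rw [map_id, Category.id_comp]
  | succ m hnm ih => rw [map_comp d n m (m + 1) hnm m.le_succ, map_le_succ, Category.assoc, hγ, ih]

namespace OCat

variable {K : Type u} [Category.{v} K] [OCat K] {X Y Z : K}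

theorem comp_ωSup_of_eventually_eq {f : X ⟶ Y} {c : Chain (Y ⟶ Z)} {g : X ⟶ Z} (n : ℕ)
    (h : ∀ m, n ≤ m → f ≫ c m = g) : f ≫ ωSup c = g := by
  rw [comp_cont_right f c fun _ _ hij => comp_mono le_rfl (c.monotone hij)]
  exact ωSup_eq_of_eventually_eq n h

theorem ωSup_comp_of_forall_eq {c : Chain (X ⟶ Y)} {g : Y ⟶ Z} {c' : Chain (X ⟶ Z)}
    (h : ∀ n, c n ≫ g = c' n) : ωSup c ≫ g = ωSup c' := by
  rw [comp_cont_left g c fun _ _ hij => comp_mono (c.monotone hij) le_rfl]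
  congr 1
  ext n
  exact h n

end OCat

section OColimit

variable {K : Type u} [Category.{v} K] [OCat K] {X : ℕ → K} {A B : K}
  (κ : ∀ n, X n ⟶ A) (κp : ∀ n, A ⟶ X n)

theorem comp_ωSup_proj_comp (d : ∀ n, X n ⟶ X (n + 1)) (hκ : ∀ n, d n ≫ κ (n + 1) = κ n)
    (hκκp : ∀ n, κ n ≫ κp n = 𝟙 (X n)) (γ : ∀ n, X n ⟶ B) (hγ : ∀ n, d n ≫ γ (n + 1) = γ n)
    (hm : Monotone fun m => κp m ≫ γ m) (n : ℕ) :
    κ n ≫ ωSup ⟨fun m => κp m ≫ γ m, hm⟩ = γ n := by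
  refine OCat.comp_ωSup_of_eventually_eq n fun m hnm => ?_
  have hκnm : κ n ≫ κp m = Functor.OfSequence.map d n m hnm := by
    rw [← Functor.OfSequence.map_comp_of_cocone d κ hκ hnm, Category.assoc, hκκp,
      Category.comp_id]
  change κ n ≫ κp m ≫ γ m = γ n
  rw [← Category.assoc, hκnm, Functor.OfSequence.map_comp_of_cocone d γ hγ hnm]

theorem eq_ωSup_proj_comp (hmono : Monotone fun n => κp n ≫ κ n)
    (hsup : ωSup ⟨fun n => κp n ≫ κ n, hmono⟩ = 𝟙 A) (ψ : A ⟶ B) (γ : ∀ n, X n ⟶ B)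
    (hψ : ∀ n, κ n ≫ ψ = γ n) (hm : Monotone fun n => κp n ≫ γ n) :
    ψ = ωSup ⟨fun n => κp n ≫ γ n, hm⟩ :=
  calc ψ = ωSup ⟨fun n => κp n ≫ κ n, hmono⟩ ≫ ψ := by rw [hsup, Category.id_comp]
    _ = _ := OCat.ωSup_comp_of_forall_eq fun n => by
      change (κp n ≫ κ n) ≫ ψ = κp n ≫ γ n
      rw [Category.assoc, hψ]

end OColimit

section Algebra

variable {K : Type u} [Category.{v} K] (F : K ⥤ K) {X : K} (k : X ⟶ F.obj X)
  {B : K} (b : F.obj B ⟶ B) (β : ∀ n, pob F X n ⟶ B) (hβ : ∀ n, β (n + 1) = F.map (β n) ≫ b)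

include hβ

theorem plink_comp_of_iterate (h₀ : k ≫ β 1 = β 0) (n : ℕ) : plink F k n ≫ β (n + 1) = β n := by
  induction n with
  | zero => exact h₀
  | succ n ih =>
    change F.map (plink F k n) ≫ β (n + 2) = β (n + 1)
    rw [hβ (n + 1), ← Category.assoc, ← F.map_comp, ih, hβ n]

omit k in
theorem comp_eq_of_algebra_hom {A : K} (a : F.obj A ⟶ A) (κ : ∀ n, pob F X n ⟶ A)
    (hκ : ∀ n, F.map (κ n) ≫ a = κ (n + 1)) (ψ : A ⟶ B) (hψ : a ≫ ψ = F.map ψ ≫ b)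
    (h₀ : κ 0 ≫ ψ = β 0) (n : ℕ) : κ n ≫ ψ = β n := by
  induction n with
  | zero => exact h₀
  | succ n ih =>
    have hFκ : F.map (κ n) ≫ a ≫ ψ = F.map (β n) ≫ b := by
      rw [hψ, ← Category.assoc, ← F.map_comp, ih]
    rw [← hκ n, hβ]
    exact (Category.assoc _ _ _).trans hFκ

end Algebra

theorem fold_comp_ωSup_proj_comp {K : Type u} [Category.{v} K] [OCat K] (F : K ⥤ K)
    (hFmono : ∀ {X Y : K} {f g : X ⟶ Y}, f ≤ g → F.map f ≤ F.map g)
    (hFcont : ∀ {X Y : K} (c : Chain (X ⟶ Y)) (hm : Monotone fun n => F.map (c n)),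
      F.map (ωSup c) = ωSup ⟨fun n => F.map (c n), hm⟩)
    {X A B : K} (b : F.obj B ⟶ B) (κ : ∀ n, pob F X n ⟶ A) (κp : ∀ n, A ⟶ pob F X n)
    (β : ∀ n, pob F X n ⟶ B) (hβ : ∀ n, β (n + 1) = F.map (β n) ≫ b)
    (hf : Monotone fun n => F.map (κp n) ≫ κ (n + 1)) (hφ : Monotone fun n => κp n ≫ β n)
    (hκφ : ∀ n, κ (n + 1) ≫ ωSup ⟨fun n => κp n ≫ β n, hφ⟩ = β (n + 1)) :
    ωSup ⟨fun n => F.map (κp n) ≫ κ (n + 1), hf⟩ ≫ ωSup ⟨fun n => κp n ≫ β n, hφ⟩ =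
      F.map (ωSup ⟨fun n => κp n ≫ β n, hφ⟩) ≫ b := by
  let c : Chain (F.obj A ⟶ B) :=
    ⟨fun n => F.map (κp n ≫ β n) ≫ b, fun _ _ h => OCat.comp_mono (hFmono (hφ h)) le_rfl⟩
  rw [OCat.ωSup_comp_of_forall_eq (c' := c), hFcont _ fun _ _ h => hFmono (hφ h),
    OCat.ωSup_comp_of_forall_eq (c' := c) fun _ => rfl]
  intro n
  have hFβ : F.map (κp n) ≫ β (n + 1) = F.map (κp n ≫ β n) ≫ b := by
    rw [hβ, F.map_comp, Category.assoc]
  exact (Category.assoc _ _ _).trans ((congrArg (F.map (κp n) ≫ ·) (hκφ n)).trans hFβ)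

theorem initial_algebra {K : Type u} [Category.{v} K] [OCat K]
    (bot : K) (ι : ∀ A : K, bot ⟶ A) (hinit : ∀ (A : K) (f : bot ⟶ A), f = ι A)
    (F : K ⥤ K)
    (hFmono : ∀ {X Y : K} {f g : X ⟶ Y}, f ≤ g → F.map f ≤ F.map g)
    (hFcont : ∀ {X Y : K} (c : Chain (X ⟶ Y))
      (hm : Monotone fun n => F.map (c n)),
      F.map (ωSup c) = ωSup ⟨fun n => F.map (c n), hm⟩)
    (A : K) (κ : ∀ n, pob F bot n ⟶ A) (κp : ∀ n, A ⟶ pob F bot n)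
    (hcocone : ∀ n, plink F (ι (F.obj bot)) n ≫ κ (n + 1) = κ n)
    (hκ₁ : ∀ n, κ n ≫ κp n = 𝟙 (pob F bot n))
    (hκmono : Monotone fun n => κp n ≫ κ n)
    (hκsup : ωSup ⟨fun n => κp n ≫ κ n, hκmono⟩ = 𝟙 A)
    (B : K) (b : F.obj B ⟶ B)
    (β : ∀ n, pob F bot n ⟶ B)
    (hβ₀ : β 0 = ι B) (hβs : ∀ n, β (n + 1) = F.map (β n) ≫ b) :
    ∀ (hf : Monotone fun n => F.map (κp n) ≫ κ (n + 1))
      (hφ : Monotone fun n => κp n ≫ β n),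
      (ωSup ⟨fun n => F.map (κp n) ≫ κ (n + 1), hf⟩ ≫ ωSup ⟨fun n => κp n ≫ β n, hφ⟩
          = F.map (ωSup ⟨fun n => κp n ≫ β n, hφ⟩) ≫ b) ∧
      (∀ ψ : A ⟶ B,
        ωSup ⟨fun n => F.map (κp n) ≫ κ (n + 1), hf⟩ ≫ ψ = F.map ψ ≫ b →
        ψ = ωSup ⟨fun n => κp n ≫ β n, hφ⟩) := by
  intro hf hφ
  set k := ι (F.obj bot)
  have hinitβ : ∀ f : bot ⟶ B, f = β 0 := fun f => (hinit B f).trans hβ₀.symm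
  have hβ : ∀ n, plink F k n ≫ β (n + 1) = β n := plink_comp_of_iterate F k b β hβs (hinitβ _)
  have hκφ : ∀ n, κ n ≫ ωSup ⟨fun n => κp n ≫ β n, hφ⟩ = β n :=
    comp_ωSup_proj_comp κ κp (plink F k) hcocone hκ₁ β hβ hφ
  have hκfold : ∀ n, F.map (κ n) ≫ ωSup ⟨fun n => F.map (κp n) ≫ κ (n + 1), hf⟩ = κ (n + 1) :=
    comp_ωSup_proj_comp (fun n => F.map (κ n)) (fun n => F.map (κp n))
      (fun n => F.map (plink F k n)) (fun n => by rw [← F.map_comp, hcocone])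
      (fun n => by rw [← F.map_comp, hκ₁, F.map_id]) (fun n => κ (n + 1))
      (fun n => hcocone (n + 1)) hf
  exact ⟨fold_comp_ωSup_proj_comp F hFmono hFcont b κ κp β hβs hf hφ fun n => hκφ (n + 1),
    fun ψ hψ => eq_ωSup_proj_comp κ κp hκmono hκsup ψ β
      (comp_eq_of_algebra_hom F b β hβs _ κ hκfold ψ hψ (hinitβ _)) hφ⟩
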